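/- arXiv:nlin/0003057 — 6 statements merged into one kernel-verified Lean document; each statement's English description precedes it below -/
import Mathlib

section
/- For all complex numbers a, b and every real α ≥ 0, one has |(a-b) + α(a|a|² - b|b|²)| ≥ |a-b|·(1 + α(|a|² + |b|²)/2). -/
/-!
Write `x = a - b` and `y = ‖a‖² a - ‖b‖² b`. Expanding the inner product gives the identity
`⟪x, y⟫ = ‖x‖² (‖a‖² + ‖b‖²) / 2 + (‖a‖² - ‖b‖²)² / 2`, so `⟪x, x + α y⟫ ≥ ‖x‖² (1 + α (‖a‖² + ‖b‖²) / 2)`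
for `α ≥ 0`, and Cauchy–Schwarz turns this into the bound on `‖x + α y‖`.
-/

open scoped RealInnerProductSpace

section InnerProductSpace

variable {E : Type*} [NormedAddCommGroup E] [InnerProductSpace ℝ E]

theorem inner_sub_norm_sq_smul_sub (a b : E) :
    ⟪a - b, ‖a‖ ^ 2 • a - ‖b‖ ^ 2 • b⟫ =
      ‖a - b‖ ^ 2 * (‖a‖ ^ 2 + ‖b‖ ^ 2) / 2 + (‖a‖ ^ 2 - ‖b‖ ^ 2) ^ 2 / 2 := by
  rw [norm_sub_sq_real, inner_sub_left, inner_sub_right, inner_sub_right, real_inner_smul_right,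
    real_inner_smul_right, real_inner_smul_right, real_inner_smul_right,
    real_inner_self_eq_norm_sq, real_inner_self_eq_norm_sq, real_inner_comm b a]
  ring

theorem le_inner_sub_norm_sq_smul_sub (a b : E) :
    ‖a - b‖ ^ 2 * (‖a‖ ^ 2 + ‖b‖ ^ 2) / 2 ≤ ⟪a - b, ‖a‖ ^ 2 • a - ‖b‖ ^ 2 • b⟫ := by
  rw [inner_sub_norm_sq_smul_sub]
  exact le_add_of_nonneg_right (by positivity)

theorem norm_mul_le_norm_of_norm_sq_mul_le_inner {x v : E} {r : ℝ}
    (h : ‖x‖ ^ 2 * r ≤ ⟪x, v⟫) : ‖x‖ * r ≤ ‖v‖ := by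
  rcases (norm_nonneg x).eq_or_lt with hx | hx
  · rw [← hx, zero_mul]
    exact norm_nonneg v
  · refine le_of_mul_le_mul_left ?_ hx
    calc ‖x‖ * (‖x‖ * r) = ‖x‖ ^ 2 * r := by ring
      _ ≤ ⟪x, v⟫ := h
      _ ≤ ‖x‖ * ‖v‖ := real_inner_le_norm x v

theorem norm_sub_mul_le_norm_sub_add_smul_norm_sq_smul_sub (a b : E) {α : ℝ} (hα : 0 ≤ α) :
    ‖a - b‖ * (1 + α * (‖a‖ ^ 2 + ‖b‖ ^ 2) / 2) ≤
      ‖(a - b) + α • (‖a‖ ^ 2 • a - ‖b‖ ^ 2 • b)‖ := by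
  apply norm_mul_le_norm_of_norm_sq_mul_le_inner
  rw [inner_add_right, real_inner_smul_right, real_inner_self_eq_norm_sq]
  linarith [mul_le_mul_of_nonneg_left (le_inner_sub_norm_sq_smul_sub a b) hα]

end InnerProductSpace

theorem stmt0 (a b : ℂ) (α : ℝ) (hα : 0 ≤ α) :
    ‖a - b‖ * (1 + α * (‖a‖ ^ 2 + ‖b‖ ^ 2) / 2) ≤
      ‖(a - b) +
        (α : ℂ) * (a * (‖a‖ : ℂ) ^ 2 - b * (‖b‖ : ℂ) ^ 2)‖ := by
  simpa [Complex.real_smul, mul_comm] using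
    norm_sub_mul_le_norm_sub_add_smul_norm_sq_smul_sub a b hα
end

section
/- Let f and g be two nonnegative even functions on ℝ that are integrable and monotone decreasing on [0,∞). Then for every x ∈ ℝ, |(f ⋆ g)(x)| ≤ f(x/2)·‖g‖₁ + g(x/2)·‖f‖₁, where ⋆ denotes convolution. -/
/-! By the triangle inequality, |x - y| ≥ |x|/2 or |y| ≥ |x|/2. In the first case
f(x - y) ≤ f(x/2), in the second g(y) ≤ g(x/2), so pointwise
f(x - y) g(y) ≤ f(x/2) g(y) + g(x/2) f(x - y); integrating and using translation invariance
of Lebesgue measure gives the bound. -/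

open MeasureTheory

namespace Function.Even

section

variable {α β : Type*} [AddCommGroup α] [LinearOrder α] {f : α → β}

lemma apply_abs (hf : f.Even) (x : α) : f |x| = f x := by
  rcases abs_choice x with h | h <;> simp [h, hf.eq]

lemma apply_le_apply_of_abs_le_abs [IsOrderedAddMonoid α] [Preorder β] (hf : f.Even)
    (hfm : AntitoneOn f (Set.Ici 0)) {a b : α} (h : |b| ≤ |a|) : f a ≤ f b := by
  rw [← hf.apply_abs a, ← hf.apply_abs b]
  exact hfm (abs_nonneg b) (abs_nonneg a) h

end

lemma apply_sub_mul_apply_le {𝕜 R : Type*} [Field 𝕜] [LinearOrder 𝕜] [IsStrictOrderedRing 𝕜]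
    [CommSemiring R] [PartialOrder R] [IsOrderedRing R] {f g : 𝕜 → R}
    (hf0 : ∀ x, 0 ≤ f x) (hg0 : ∀ x, 0 ≤ g x) (hfe : f.Even) (hge : g.Even)
    (hfm : AntitoneOn f (Set.Ici 0)) (hgm : AntitoneOn g (Set.Ici 0)) (x y : 𝕜) :
    f (x - y) * g y ≤ f (x / 2) * g y + g (x / 2) * f (x - y) := by
  have habs_half : |x / 2| = |x| / 2 := by simp [abs_div]
  have htri : |x| - |y| ≤ |x - y| := abs_sub_abs_le_abs_sub x y
  rcases le_total (|x / 2|) (|x - y|) with h | h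
  · calc f (x - y) * g y ≤ f (x / 2) * g y :=
          mul_le_mul_of_nonneg_right (hfe.apply_le_apply_of_abs_le_abs hfm h) (hg0 y)
      _ ≤ _ := le_add_of_nonneg_right (mul_nonneg (hg0 _) (hf0 _))
  · have hy : |x / 2| ≤ |y| := by rw [habs_half] at h ⊢; linarith
    calc f (x - y) * g y ≤ g (x / 2) * f (x - y) := by
          rw [mul_comm]
          exact mul_le_mul_of_nonneg_right (hge.apply_le_apply_of_abs_le_abs hgm hy) (hf0 _)
      _ ≤ _ := le_add_of_nonneg_left (mul_nonneg (hf0 _) (hg0 _))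

end Function.Even

theorem stmt1 (f g : ℝ → ℝ) (hf0 : ∀ x, 0 ≤ f x) (hg0 : ∀ x, 0 ≤ g x)
    (hfe : ∀ x, f (-x) = f x) (hge : ∀ x, g (-x) = g x)
    (hfi : Integrable f) (hgi : Integrable g)
    (hfm : AntitoneOn f (Set.Ici 0)) (hgm : AntitoneOn g (Set.Ici 0)) (x : ℝ) :
    |∫ y, f (x - y) * g y| ≤ f (x / 2) * (∫ y, |g y|) + g (x / 2) * (∫ y, |f y|) := by
  have hprod_nonneg : ∀ y, 0 ≤ f (x - y) * g y := fun y => mul_nonneg (hf0 _) (hg0 _)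
  have hg_int : Integrable fun y => f (x / 2) * g y := hgi.const_mul _
  have hf_int : Integrable fun y => g (x / 2) * f (x - y) := (hfi.comp_sub_left x).const_mul _
  calc |∫ y, f (x - y) * g y| = ∫ y, f (x - y) * g y :=
        abs_of_nonneg (integral_nonneg hprod_nonneg)
    _ ≤ ∫ y, (f (x / 2) * g y + g (x / 2) * f (x - y)) :=
        integral_mono_of_nonneg (ae_of_all _ hprod_nonneg) (hg_int.add hf_int)
          (ae_of_all _ (Function.Even.apply_sub_mul_apply_le hf0 hg0 hfe hge hfm hgm x))
    _ = f (x / 2) * (∫ y, g y) + g (x / 2) * (∫ y, f y) := by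
        rw [integral_add hg_int hf_int, integral_const_mul, integral_const_mul,
          integral_sub_left_eq_self]
    _ = f (x / 2) * (∫ y, |g y|) + g (x / 2) * (∫ y, |f y|) := by
        simp only [abs_of_nonneg, hf0, hg0]
end

section
/- The map u ↦ -u·|u|² on L^∞(ℝ,ℂ) is dissipative, i.e., for all u, v ∈ L^∞(ℝ,ℂ) and α ≥ 0, ‖u - v‖_∞ ≤ ‖(u - v) + α(u|u|² - v|v|²)‖_∞. -/
open Complex

lemma mono_re (a b : ℂ) :
    0 ≤ ((starRingEnd ℂ) (a - b) *
      (a * (‖a‖ : ℂ) ^ 2 - b * (‖b‖ : ℂ) ^ 2)).re := by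
  have ha : ((‖a‖ : ℂ) ^ 2) = ((a.re ^ 2 + a.im ^ 2 : ℝ) : ℂ) := by
    norm_cast
    rw [Complex.sq_norm, Complex.normSq_apply]
    ring
  have hb : ((‖b‖ : ℂ) ^ 2) = ((b.re ^ 2 + b.im ^ 2 : ℝ) : ℂ) := by
    norm_cast
    rw [Complex.sq_norm, Complex.normSq_apply]
    ring
  rw [ha, hb]
  simp only [Complex.mul_re, Complex.sub_re, Complex.sub_im, Complex.mul_im,
    Complex.ofReal_re, Complex.ofReal_im, Complex.conj_re, Complex.conj_im,
    RingHomCompTriple.comp_apply]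
  set p := a.re; set q := a.im; set r := b.re; set s := b.im
  have h1 : (0:ℝ) ≤ ((p - r)^2 + (q - s)^2) * ((p^2 + q^2) + (r^2 + s^2)) := by positivity
  nlinarith [sq_nonneg (p^2 + q^2 - r^2 - s^2), h1]

lemma key (a b : ℂ) {α : ℝ} (hα : 0 ≤ α) :
    ‖a - b‖ ≤ ‖(a - b) + (α : ℂ) *
      (a * (‖a‖ : ℂ) ^ 2 - b * (‖b‖ : ℂ) ^ 2)‖ := by
  set d := a - b with hd
  set F := a * (‖a‖ : ℂ) ^ 2 - b * (‖b‖ : ℂ) ^ 2 with hF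
  have hmono := mono_re a b
  have h1 : ‖d‖ ^ 2 ≤ ‖d‖ * ‖d + (α : ℂ) * F‖ := by
    have e1 : ‖d‖ ^ 2 = ((starRingEnd ℂ) d * d).re := by
      rw [mul_comm, Complex.mul_conj, Complex.ofReal_re, ← Complex.sq_norm]
    have e2 : ((starRingEnd ℂ) d * d).re ≤ ((starRingEnd ℂ) d * (d + (α : ℂ) * F)).re := by
      have : ((starRingEnd ℂ) d * (d + (α : ℂ) * F)).re
          = ((starRingEnd ℂ) d * d).re + α * ((starRingEnd ℂ) d * F).re := by
        simp only [mul_add, Complex.add_re]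
        congr 1
        have : (starRingEnd ℂ) d * ((α : ℂ) * F) = (α : ℂ) * ((starRingEnd ℂ) d * F) := by
          ring
        rw [this, Complex.re_ofReal_mul]
      rw [this]
      nlinarith [mul_nonneg hα hmono]
    have e3 : ((starRingEnd ℂ) d * (d + (α : ℂ) * F)).re
        ≤ ‖d‖ * ‖d + (α : ℂ) * F‖ := by
      calc ((starRingEnd ℂ) d * (d + (α : ℂ) * F)).re
          ≤ ‖(starRingEnd ℂ) d * (d + (α : ℂ) * F)‖ := Complex.re_le_norm _
        _ = ‖d‖ * ‖d + (α : ℂ) * F‖ := by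
            rw [norm_mul, Complex.norm_conj]
        _ = ‖d‖ * ‖d + (α : ℂ) * F‖ := rfl
    linarith
  rcases eq_or_lt_of_le (norm_nonneg d) with h0 | h0
  · rw [← h0]; positivity
  · have := (mul_le_mul_iff_right₀ h0).mp (by nlinarith : ‖d‖ * ‖d‖ ≤ ‖d‖ * ‖d + (α : ℂ) * F‖)
    exact this

theorem stmt4 (u v : ℝ → ℂ) (α : ℝ) (hα : 0 ≤ α) (M : ℝ)
    (h : ∀ x, ‖(u x - v x) + (α : ℂ) *
        (u x * (‖u x‖ : ℂ) ^ 2 - v x * (‖v x‖ : ℂ) ^ 2)‖ ≤ M) :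
    ∀ x, ‖u x - v x‖ ≤ M := by
  intro x
  exact le_trans (key (u x) (v x) hα) (h x)
end

section
/- There exists a constant C > 0 such that for every twice continuously differentiable function v : ℝ → ℂ with v and v'' bounded, one has ‖v'‖_∞² ≤ C · ‖v‖_∞ · ‖v''‖_∞. -/
open intervalIntegral

lemma aux_scalar (A B D : ℝ) (hA : 0 ≤ A) (hB : 0 ≤ B) (hD : 0 ≤ D)
    (h : ∀ h > 0, h * D ≤ 2*A + B*h^2/2) : D^2 ≤ 4*(A*B) := by
  rcases eq_or_lt_of_le hD with hD0 | hD0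
  · nlinarith
  rcases eq_or_lt_of_le hB with hB0 | hB0
  · exfalso
    have hpos : (0:ℝ) < (2*A+1)/D := by positivity
    have := h _ hpos
    rw [← hB0] at this
    rw [div_mul_cancel₀] at this
    · linarith
    · exact ne_of_gt hD0
  · have hpos : (0:ℝ) < D/B := by positivity
    have h2 := h _ hpos
    have e1 : D/B * D = D^2/B := by ring
    have e2 : B*(D/B)^2/2 = D^2/(2*B) := by field_simp
    rw [e1, e2] at h2
    have : D^2/B - D^2/(2*B) = D^2/(2*B) := by field_simp; ring
    have h3 : D^2/(2*B) ≤ 2*A := by linarith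
    calc D^2 = (D^2/(2*B)) * (2*B) := by field_simp
    _ ≤ 2*A*(2*B) := by nlinarith
    _ = 4*(A*B) := by ring

theorem stmt5 :
    ∃ C > 0, ∀ v : ℝ → ℂ, ContDiff ℝ 2 v →
      (∃ M, ∀ x, ‖v x‖ ≤ M) → (∃ M, ∀ x, ‖deriv (deriv v) x‖ ≤ M) →
      (⨆ x, ‖deriv v x‖) ^ 2 ≤ C * (⨆ x, ‖v x‖) * (⨆ x, ‖deriv (deriv v) x‖) := by
  refine ⟨4, by norm_num, ?_⟩
  intro v hv hMa hMb
  obtain ⟨M, hM⟩ := hMa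
  obtain ⟨N, hN⟩ := hMb
  -- regularity
  have hv1 : ContDiff ℝ 1 (deriv v) :=
    (contDiff_succ_iff_deriv.mp (by exact_mod_cast hv : ContDiff ℝ ((1:ℕ)+1) v)).2.2
  have hd : Differentiable ℝ v := hv.differentiable (by norm_num)
  have hd' : Differentiable ℝ (deriv v) := hv1.differentiable (by norm_num)
  have hc' : Continuous (deriv v) := hd'.continuous
  have hc'' : Continuous (deriv (deriv v)) := hv1.continuous_deriv le_rfl
  -- sups
  set A := ⨆ x, ‖v x‖ with hAdef
  set B := ⨆ x, ‖deriv (deriv v) x‖ with hBdef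
  have hbddA : BddAbove (Set.range fun x => ‖v x‖) := ⟨M, by rintro y ⟨x, rfl⟩; exact hM x⟩
  have hbddB : BddAbove (Set.range fun x => ‖deriv (deriv v) x‖) :=
    ⟨N, by rintro y ⟨x, rfl⟩; exact hN x⟩
  have hA : ∀ x, ‖v x‖ ≤ A := fun x => le_ciSup hbddA x
  have hB : ∀ x, ‖deriv (deriv v) x‖ ≤ B := fun x => le_ciSup hbddB x
  have hA0 : 0 ≤ A := le_trans (norm_nonneg _) (hA 0)
  have hB0 : 0 ≤ B := le_trans (norm_nonneg _) (hB 0)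
  -- Lipschitz bound on deriv v
  have lip : ∀ x y : ℝ, ‖deriv v y - deriv v x‖ ≤ B * |y - x| := by
    intro x y
    have ftc : ∫ t in x..y, deriv (deriv v) t = deriv v y - deriv v x :=
      integral_deriv_eq_sub (fun t _ => hd' t) (hc''.intervalIntegrable x y)
    rw [← ftc]
    exact intervalIntegral.norm_integral_le_of_norm_le_const (fun t _ => hB t)
  -- pointwise key bound
  have key : ∀ x : ℝ, ∀ h > (0:ℝ), h * ‖deriv v x‖ ≤ 2*A + B*h^2/2 := by
    intro x h hh
    have ftc : ∫ t in x..(x+h), deriv v t = v (x+h) - v x :=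
      integral_deriv_eq_sub (fun t _ => hd t) (hc'.intervalIntegrable x (x+h))
    have hsplit : (∫ t in x..(x+h), (deriv v t - deriv v x))
        = (v (x+h) - v x) - h • deriv v x := by
      rw [intervalIntegral.integral_sub ((hc'.intervalIntegrable x (x+h)))
        (intervalIntegrable_const), ftc, intervalIntegral.integral_const]
      simp
    have hint : ‖∫ t in x..(x+h), (deriv v t - deriv v x)‖ ≤ B * (h^2/2) := by
      have hcomp : ∫ t in x..(x+h), B*(t-x) = B*(h^2/2) := by
        have h1 : ∫ t in x..(x+h), (t-x) = h^2/2 := by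
          rw [integral_comp_sub_right (fun t => t) x]
          simp [integral_id]
        rw [integral_const_mul, h1]
      have hle : x ≤ x + h := by linarith
      have habs : ‖∫ t in x..(x+h), (deriv v t - deriv v x)‖
          ≤ |∫ t in x..(x+h), B*(t-x)| := by
        apply intervalIntegral.norm_integral_le_abs_of_norm_le
        · filter_upwards [MeasureTheory.ae_restrict_mem measurableSet_uIoc] with t ht
          rw [Set.uIoc_of_le hle] at ht
          have h1 := lip x t
          have h2 : |t - x| = t - x := abs_of_nonneg (by linarith [ht.1])
          rw [h2] at h1
          exact h1
        · exact (Continuous.intervalIntegrable (by continuity) x (x+h))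
      rw [hcomp, abs_of_nonneg (by positivity)] at habs
      exact habs
    have hnorm : ‖h • deriv v x‖ = h * ‖deriv v x‖ := by
      rw [norm_smul, Real.norm_eq_abs, abs_of_pos hh]
    have : ‖h • deriv v x‖ ≤ ‖v (x+h) - v x‖ + B*(h^2/2) := by
      have : h • deriv v x = (v (x+h) - v x) - ∫ t in x..(x+h), (deriv v t - deriv v x) := by
        rw [hsplit]; ring_nf
      rw [this]
      calc ‖(v (x+h) - v x) - ∫ t in x..(x+h), (deriv v t - deriv v x)‖
          ≤ ‖v (x+h) - v x‖ + ‖∫ t in x..(x+h), (deriv v t - deriv v x)‖ := norm_sub_le _ _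
        _ ≤ ‖v (x+h) - v x‖ + B*(h^2/2) := by linarith
    have hvv : ‖v (x+h) - v x‖ ≤ 2*A := by
      calc ‖v (x+h) - v x‖ ≤ ‖v (x+h)‖ + ‖v x‖ := norm_sub_le _ _
      _ ≤ A + A := add_le_add (hA _) (hA _)
      _ = 2*A := by ring
    rw [hnorm] at this
    linarith
  -- conclude
  have keysq : ∀ x : ℝ, ‖deriv v x‖^2 ≤ 4*(A*B) := fun x =>
    aux_scalar A B _ hA0 hB0 (norm_nonneg _) (key x)
  have keyle : ∀ x : ℝ, ‖deriv v x‖ ≤ Real.sqrt (4*(A*B)) := by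
    intro x
    rw [Real.le_sqrt (norm_nonneg _) (by positivity)]
    exact keysq x
  have hsup : (⨆ x, ‖deriv v x‖) ≤ Real.sqrt (4*(A*B)) := ciSup_le keyle
  have hsup0 : 0 ≤ ⨆ x, ‖deriv v x‖ := Real.iSup_nonneg fun x => norm_nonneg _
  calc (⨆ x, ‖deriv v x‖)^2 ≤ (Real.sqrt (4*(A*B)))^2 := by
        apply pow_le_pow_left₀ hsup0 hsup 2
    _ = 4*(A*B) := Real.sq_sqrt (by positivity)
    _ = 4 * A * B := by ring
end

section
/- Let g_s denote the heat kernel on ℝ and φ₁ a bounded function satisfying |φ₁(x)| ≤ C_N (1+x²)^{-N/2} for some N ≥ 3 and constant C_N. Then there is a constant C such that for all s > 0 and x ∈ ℝ: (g_s ⋆ φ₁)²(x) ≤ C·( e^{-x²/(16s)}/√(1+s²) + (1+x²)^{-N/2} ). -/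
/-
Split the integral according to whether `|x - y| ≥ |x| / 2` or `|y| ≥ |x| / 2`. Where `|y|` is
large, the decay of `φ₁` gives `|φ₁ y| ≤ C_N 4^{N/2} ⟨x⟩^{-N}` and `g_s` has unit mass.
Where `|x - y|` is large, the kernel carries a Gaussian factor in `x`. For `s ≤ 1` write
`g_s(z) = √2 e^{-z²/(8s)} g_{2s}(z) ≤ √2 e^{-x²/(32s)} g_{2s}(z)`, which keeps a kernel of
unit mass; for `s ≥ 1` use `g_s(z) ≤ e^{-x²/(16s)} / √(4πs)` and `∫ ⟨y⟩^{-N} ≤ π`.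
After squaring, the first bound gives `e^{-x²/(16s)}` and the second `e^{-x²/(16s)} / s`,
and `√(1 + s²)` is comparable to `1` resp. `s` in the two ranges.
-/

open MeasureTheory Real ProbabilityTheory

lemma le_mul_sqrt_of_sq_le {a b X : ℝ} (ha : 0 ≤ a) (hb : 0 ≤ b) (h : a ^ 2 ≤ b ^ 2 * X) :
    a ≤ b * √X := by
  simpa [sqrt_mul (sq_nonneg b), sqrt_sq hb, sqrt_sq ha] using sqrt_le_sqrt h

section Decay

variable {N : ℝ}

lemma one_add_sq_rpow_neg_le_one (hN : 0 ≤ N) (y : ℝ) : (1 + y ^ 2) ^ (-(N / 2)) ≤ 1 :=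
  rpow_le_one_of_one_le_of_nonpos (by nlinarith) (by linarith)

lemma one_add_sq_rpow_neg_le_inv (hN : 2 ≤ N) (y : ℝ) :
    (1 + y ^ 2) ^ (-(N / 2)) ≤ (1 + y ^ 2)⁻¹ := by
  rw [← rpow_neg_one]
  exact rpow_le_rpow_of_exponent_le (by nlinarith) (by linarith)

lemma one_add_sq_rpow_neg_le_of_sq_le (hN : 0 ≤ N) {x y : ℝ} (h : x ^ 2 ≤ 4 * y ^ 2) :
    (1 + y ^ 2) ^ (-(N / 2)) ≤ 4 ^ (N / 2) * (1 + x ^ 2) ^ (-(N / 2)) := by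
  calc (1 + y ^ 2) ^ (-(N / 2)) ≤ ((1 + x ^ 2) / 4) ^ (-(N / 2)) :=
        rpow_le_rpow_of_nonpos (by positivity) (by linarith) (by linarith)
    _ = 4 ^ (N / 2) * (1 + x ^ 2) ^ (-(N / 2)) := by
        rw [div_rpow (by positivity) zero_le_four, rpow_neg zero_le_four, div_inv_eq_mul,
          mul_comm]

end Decay

/-- Written with the prefactor of the statement, so that its integrand is
`heatKernel s (x - y)` by definition. -/
noncomputable def heatKernel (s z : ℝ) : ℝ :=
  (4 * π * s) ^ (-(1 : ℝ) / 2) * exp (-z ^ 2 / (4 * s))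

namespace heatKernel

variable {s : ℝ}

lemma eq_exp_div_sqrt (hs : 0 ≤ s) (z : ℝ) :
    heatKernel s z = exp (-z ^ 2 / (4 * s)) / √(4 * π * s) := by
  rw [heatKernel, sqrt_eq_rpow, div_eq_inv_mul (exp _), ← rpow_neg (by positivity), neg_div]

lemma eq_gaussianPDFReal (hs : 0 ≤ s) (z : ℝ) :
    heatKernel s z = gaussianPDFReal 0 (2 * s).toNNReal z := by
  rw [eq_exp_div_sqrt hs, gaussianPDFReal, Real.coe_toNNReal _ (by positivity), sub_zero]
  ring_nf

lemma nonneg (hs : 0 ≤ s) (z : ℝ) : 0 ≤ heatKernel s z := by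
  rw [eq_gaussianPDFReal hs]
  exact gaussianPDFReal_nonneg _ _ _

lemma integrable_sub (hs : 0 ≤ s) (x : ℝ) : Integrable fun y ↦ heatKernel s (x - y) := by
  simp_rw [eq_gaussianPDFReal hs]
  exact (integrable_gaussianPDFReal _ _).comp_sub_left x

lemma integral_sub (hs : 0 < s) (x : ℝ) : ∫ y, heatKernel s (x - y) = 1 := by
  simp_rw [eq_gaussianPDFReal hs.le]
  rw [integral_sub_left_eq_self (gaussianPDFReal 0 _), integral_gaussianPDFReal_eq_one]
  simpa using hs

lemma eq_sqrt_two_mul (hs : 0 < s) (z : ℝ) :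
    heatKernel s z = √2 * exp (-z ^ 2 / (8 * s)) * heatKernel (2 * s) z := by
  have hexp :
      exp (-z ^ 2 / (4 * s)) = exp (-z ^ 2 / (8 * s)) * exp (-z ^ 2 / (4 * (2 * s))) := by
    rw [← exp_add]; congr 1; field_simp; ring
  rw [eq_exp_div_sqrt hs.le, eq_exp_div_sqrt (by positivity), hexp,
    show 4 * π * (2 * s) = 2 * (4 * π * s) by ring, sqrt_mul zero_le_two]
  field_simp

lemma le_sqrt_two_mul_of_sq_le (hs : 0 < s) {a z : ℝ} (h : a ^ 2 ≤ 4 * z ^ 2) :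
    heatKernel s z ≤ √2 * exp (-a ^ 2 / (32 * s)) * heatKernel (2 * s) z := by
  rw [eq_sqrt_two_mul hs]
  gcongr _ * ?_ * _
  · exact nonneg (by positivity) z
  · refine exp_le_exp.2 ?_
    rw [div_le_div_iff₀ (by positivity) (by positivity)]
    nlinarith

lemma le_of_sq_le (hs : 0 < s) {a z : ℝ} (h : a ^ 2 ≤ 4 * z ^ 2) :
    heatKernel s z ≤ exp (-a ^ 2 / (16 * s)) / √(4 * π * s) := by
  rw [eq_exp_div_sqrt hs.le]
  gcongr ?_ / _
  refine exp_le_exp.2 ?_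
  rw [div_le_div_iff₀ (by positivity) (by positivity)]
  nlinarith

end heatKernel

section Convolution

variable {E : Type*} [NormedAddCommGroup E] [NormedSpace ℝ E] {φ : ℝ → E} {s x : ℝ}

lemma norm_integral_heatKernel_smul_le_integral_add (hs : 0 < s) {g : ℝ → ℝ} {A : ℝ}
    (hg : Integrable g)
    (h : ∀ y, heatKernel s (x - y) * ‖φ y‖ ≤ g y + A * heatKernel s (x - y)) :
    ‖∫ y, heatKernel s (x - y) • φ y‖ ≤ (∫ y, g y) + A :=
  calc ‖∫ y, heatKernel s (x - y) • φ y‖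
      ≤ ∫ y, heatKernel s (x - y) * ‖φ y‖ := by
        refine (norm_integral_le_integral_norm _).trans_eq ?_
        simp_rw [norm_smul, norm_of_nonneg (heatKernel.nonneg hs.le _)]
    _ ≤ ∫ y, (g y + A * heatKernel s (x - y)) :=
        integral_mono_of_nonneg
          (.of_forall fun y ↦ by have := heatKernel.nonneg hs.le (x - y); positivity)
          (hg.add ((heatKernel.integrable_sub hs.le x).const_mul A)) (.of_forall h)
    _ = (∫ y, g y) + A := by
        rw [integral_add hg ((heatKernel.integrable_sub hs.le x).const_mul A), integral_const_mul,
          heatKernel.integral_sub hs, mul_one]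

variable {N C : ℝ}

lemma norm_integral_heatKernel_smul_le_of_decay (hs : 0 < s) (hN : 0 ≤ N) (hC : 0 ≤ C)
    (hφ : ∀ y, ‖φ y‖ ≤ C * (1 + y ^ 2) ^ (-(N / 2))) {g : ℝ → ℝ} (hg : Integrable g)
    (hg₀ : ∀ y, 0 ≤ g y)
    (hfar : ∀ y, x ^ 2 ≤ 4 * (x - y) ^ 2 → heatKernel s (x - y) * ‖φ y‖ ≤ g y) :
    ‖∫ y, heatKernel s (x - y) • φ y‖ ≤
      (∫ y, g y) + C * 4 ^ (N / 2) * (1 + x ^ 2) ^ (-(N / 2)) := by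
  refine norm_integral_heatKernel_smul_le_integral_add hs hg fun y ↦ ?_
  have hK := heatKernel.nonneg hs.le (x - y)
  rcases le_or_gt (x ^ 2) (4 * (x - y) ^ 2) with hxy | hxy
  · have hA : 0 ≤ C * 4 ^ (N / 2) * (1 + x ^ 2) ^ (-(N / 2)) := by positivity
    nlinarith [hfar y hxy]
  · have hy : x ^ 2 ≤ 4 * y ^ 2 := by nlinarith [sq_nonneg (x - 2 * y)]
    have hφy :=
      (hφ y).trans (mul_le_mul_of_nonneg_left (one_add_sq_rpow_neg_le_of_sq_le hN hy) hC)
    nlinarith [mul_le_mul_of_nonneg_left hφy hK, hg₀ y]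

lemma norm_integral_heatKernel_smul_le_sqrt_two_mul_exp (hs : 0 < s) (hN : 0 ≤ N) (hC : 0 ≤ C)
    (hφ : ∀ y, ‖φ y‖ ≤ C * (1 + y ^ 2) ^ (-(N / 2))) :
    ‖∫ y, heatKernel s (x - y) • φ y‖ ≤
      √2 * exp (-x ^ 2 / (32 * s)) * C + C * 4 ^ (N / 2) * (1 + x ^ 2) ^ (-(N / 2)) := by
  have hs₂ : 0 < 2 * s := by positivity
  have hK₂ := heatKernel.integrable_sub hs₂.le x
  convert norm_integral_heatKernel_smul_le_of_decay hs hN hC hφ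
    (hK₂.const_mul (√2 * exp (-x ^ 2 / (32 * s)) * C))
    (fun y ↦ by have := heatKernel.nonneg hs₂.le (x - y); positivity) (fun y hy ↦ ?_) using 2
  · rw [integral_const_mul, heatKernel.integral_sub hs₂, mul_one]
  · have hφC : ‖φ y‖ ≤ C :=
      (hφ y).trans (mul_le_of_le_one_right hC (one_add_sq_rpow_neg_le_one hN y))
    calc heatKernel s (x - y) * ‖φ y‖
        ≤ √2 * exp (-x ^ 2 / (32 * s)) * heatKernel (2 * s) (x - y) * C :=
          mul_le_mul (heatKernel.le_sqrt_two_mul_of_sq_le hs hy) hφC (norm_nonneg _)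
            (by have := heatKernel.nonneg hs₂.le (x - y); positivity)
      _ = √2 * exp (-x ^ 2 / (32 * s)) * C * heatKernel (2 * s) (x - y) := by ring

lemma norm_integral_heatKernel_smul_le_exp_div_sqrt (hs : 0 < s) (hN : 2 ≤ N) (hC : 0 ≤ C)
    (hφ : ∀ y, ‖φ y‖ ≤ C * (1 + y ^ 2) ^ (-(N / 2))) :
    ‖∫ y, heatKernel s (x - y) • φ y‖ ≤
      C * π * exp (-x ^ 2 / (16 * s)) / √(4 * π * s) +
        C * 4 ^ (N / 2) * (1 + x ^ 2) ^ (-(N / 2)) := by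
  convert norm_integral_heatKernel_smul_le_of_decay hs (by linarith) hC hφ
    (integrable_inv_one_add_sq.const_mul (C * exp (-x ^ 2 / (16 * s)) / √(4 * π * s)))
    (fun y ↦ by positivity) (fun y hy ↦ ?_) using 2
  · rw [integral_const_mul, integral_univ_inv_one_add_sq]
    ring
  · have hφy : ‖φ y‖ ≤ C * (1 + y ^ 2)⁻¹ :=
      (hφ y).trans (mul_le_mul_of_nonneg_left (one_add_sq_rpow_neg_le_inv hN y) hC)
    calc heatKernel s (x - y) * ‖φ y‖
        ≤ exp (-x ^ 2 / (16 * s)) / √(4 * π * s) * (C * (1 + y ^ 2)⁻¹) :=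
          mul_le_mul (heatKernel.le_of_sq_le hs hy) hφy (norm_nonneg _) (by positivity)
      _ = C * exp (-x ^ 2 / (16 * s)) / √(4 * π * s) * (1 + y ^ 2)⁻¹ := by ring

lemma norm_integral_heatKernel_smul_le_of_le_one (hs : 0 < s) (hs₁ : s ≤ 1) (hN : 0 ≤ N)
    (hC : 0 ≤ C) (hφ : ∀ y, ‖φ y‖ ≤ C * (1 + y ^ 2) ^ (-(N / 2))) :
    ‖∫ y, heatKernel s (x - y) • φ y‖ ≤
      2 * C * √(exp (-x ^ 2 / (16 * s)) / √(1 + s ^ 2)) +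
        C * 4 ^ (N / 2) * (1 + x ^ 2) ^ (-(N / 2)) := by
  refine (norm_integral_heatKernel_smul_le_sqrt_two_mul_exp hs hN hC hφ).trans
    (add_le_add (le_mul_sqrt_of_sq_le (by positivity) (by positivity) ?_) le_rfl)
  have hexp : exp (-x ^ 2 / (32 * s)) ^ 2 = exp (-x ^ 2 / (16 * s)) := by
    rw [sq, ← exp_add]; congr 1; field_simp; ring
  have hsqrt : √(1 + s ^ 2) ≤ 2 := (sqrt_le_left zero_le_two).2 (by nlinarith)
  rw [mul_pow, mul_pow, sq_sqrt zero_le_two, hexp, mul_div_assoc',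
    le_div_iff₀ (by positivity)]
  have : 0 ≤ exp (-x ^ 2 / (16 * s)) * C ^ 2 := by positivity
  nlinarith

lemma norm_integral_heatKernel_smul_le_of_one_le (hs₁ : 1 ≤ s) (hN : 2 ≤ N) (hC : 0 ≤ C)
    (hφ : ∀ y, ‖φ y‖ ≤ C * (1 + y ^ 2) ^ (-(N / 2))) :
    ‖∫ y, heatKernel s (x - y) • φ y‖ ≤
      2 * C * √(exp (-x ^ 2 / (16 * s)) / √(1 + s ^ 2)) +
        C * 4 ^ (N / 2) * (1 + x ^ 2) ^ (-(N / 2)) := by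
  have hs : 0 < s := by linarith
  refine (norm_integral_heatKernel_smul_le_exp_div_sqrt hs hN hC hφ).trans
    (add_le_add (le_mul_sqrt_of_sq_le (by positivity) (by positivity) ?_) le_rfl)
  set E := exp (-x ^ 2 / (16 * s))
  have hE₁ : E ≤ 1 :=
    exp_le_one_iff.2 (div_nonpos_of_nonpos_of_nonneg (by nlinarith) (by positivity))
  have hEE : E ^ 2 ≤ E := by nlinarith [exp_pos (-x ^ 2 / (16 * s))]
  have hsqrt : √(1 + s ^ 2) ≤ 2 * s := (sqrt_le_left (by linarith)).2 (by nlinarith)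
  rw [div_pow, sq_sqrt (by positivity), mul_div_assoc',
    div_le_div_iff₀ (by positivity) (by positivity)]
  calc (C * π * E) ^ 2 * √(1 + s ^ 2) = C ^ 2 * π * E ^ 2 * π * √(1 + s ^ 2) := by ring
    _ ≤ C ^ 2 * 4 * E * π * (2 * s) := by gcongr; exact pi_le_four
    _ ≤ (2 * C) ^ 2 * E * (4 * π * s) := by
      have : 0 ≤ C ^ 2 * E * π * s := by positivity
      linarith

lemma norm_integral_heatKernel_smul_le (hs : 0 < s) (hN : 2 ≤ N) (hC : 0 ≤ C)
    (hφ : ∀ y, ‖φ y‖ ≤ C * (1 + y ^ 2) ^ (-(N / 2))) (x : ℝ) :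
    ‖∫ y, heatKernel s (x - y) • φ y‖ ≤
      2 * C * √(exp (-x ^ 2 / (16 * s)) / √(1 + s ^ 2)) +
        C * 4 ^ (N / 2) * (1 + x ^ 2) ^ (-(N / 2)) := by
  rcases le_total s 1 with hs₁ | hs₁
  · exact norm_integral_heatKernel_smul_le_of_le_one hs hs₁ (by linarith) hC hφ
  · exact norm_integral_heatKernel_smul_le_of_one_le hs₁ hN hC hφ

end Convolution

theorem stmt14_general (φ₁ : ℝ → ℂ) (N C_N : ℝ) (hN : 3 ≤ N) (hC : 0 ≤ C_N)
    (hφ : ∀ x : ℝ, ‖φ₁ x‖ ≤ C_N * (1 + x ^ 2) ^ (-(N / 2))) :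
    ∃ C > 0, ∀ s : ℝ, 0 < s → ∀ x : ℝ,
      ‖∫ y, (((4 * Real.pi * s) ^ (-(1 : ℝ) / 2) * Real.exp (-(x - y) ^ 2 / (4 * s)) : ℝ)) • φ₁ y‖ ^ 2 ≤
        C * (Real.exp (-x ^ 2 / (16 * s)) / Real.sqrt (1 + s ^ 2) + (1 + x ^ 2) ^ (-(N / 2))) := by
  set B := C_N * 4 ^ (N / 2)
  refine ⟨8 * C_N ^ 2 + 2 * B ^ 2 + 1, by positivity, fun s hs x ↦ ?_⟩
  set X := exp (-x ^ 2 / (16 * s)) / √(1 + s ^ 2)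
  set P := (1 + x ^ 2) ^ (-(N / 2))
  have hX : 0 ≤ X := by positivity
  have hP : 0 ≤ P := by positivity
  have hP₁ : P ≤ 1 := one_add_sq_rpow_neg_le_one (by linarith) x
  change ‖∫ y, heatKernel s (x - y) • φ₁ y‖ ^ 2 ≤ _
  calc ‖∫ y, heatKernel s (x - y) • φ₁ y‖ ^ 2
      ≤ (2 * C_N * √X + B * P) ^ 2 :=
        pow_le_pow_left₀ (norm_nonneg _)
          (norm_integral_heatKernel_smul_le hs (by linarith) hC hφ x) 2
    _ ≤ 2 * ((2 * C_N * √X) ^ 2 + (B * P) ^ 2) := add_sq_le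
    _ = 8 * C_N ^ 2 * X + 2 * B ^ 2 * P ^ 2 := by rw [mul_pow _ √X, sq_sqrt hX]; ring
    _ ≤ (8 * C_N ^ 2 + 2 * B ^ 2 + 1) * (X + P) := by
        have : B ^ 2 * P ^ 2 ≤ B ^ 2 * P := by gcongr; nlinarith
        nlinarith [sq_nonneg C_N, sq_nonneg B]

theorem stmt14 (φ₁ : ℝ → ℂ) (N C_N : ℝ) (hN : 3 ≤ N) (hC : 0 ≤ C_N)
    (hmeas : Measurable φ₁)
    (hφ : ∀ x : ℝ, ‖φ₁ x‖ ≤ C_N * (1 + x ^ 2) ^ (-(N / 2))) :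
    ∃ C > 0, ∀ s : ℝ, 0 < s → ∀ x : ℝ,
      ‖∫ y, (((4 * Real.pi * s) ^ (-(1 : ℝ) / 2) * Real.exp (-(x - y) ^ 2 / (4 * s)) : ℝ)) • φ₁ y‖ ^ 2 ≤
        C * (Real.exp (-x ^ 2 / (16 * s)) / Real.sqrt (1 + s ^ 2) + (1 + x ^ 2) ^ (-(N / 2))) :=
  stmt14_general φ₁ N C_N hN hC hφ
end

section
/- Let {x_n}_{n≥0} be a strictly positive decreasing sequence with x_n → 0 and x_n/x_{n+1} bounded. Then there exists a function ρ : ℝ → ℝ that is bounded, twice continuously differentiable, strictly positive, satisfies ρ(n) = x_{|n|} for all integers n, and such that |ρ'(x)/ρ(x)| and |ρ''(x)/ρ(x)| are uniformly bounded on ℝ. -/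
open Set

noncomputable def Pfun (t : ℝ) : ℝ := 10*t^3 - 15*t^4 + 6*t^5
noncomputable def Pfun₁ (t : ℝ) : ℝ := 30*t^2 - 60*t^3 + 30*t^4
noncomputable def Pfun₂ (t : ℝ) : ℝ := 60*t - 180*t^2 + 120*t^3

lemma hP (t : ℝ) : HasDerivAt Pfun (Pfun₁ t) t := by
  unfold Pfun Pfun₁
  have h := (((hasDerivAt_pow 3 t).const_mul (10:ℝ)).sub ((hasDerivAt_pow 4 t).const_mul 15)).add
    ((hasDerivAt_pow 5 t).const_mul 6)
  exact h.congr_deriv (by push_cast; ring)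

lemma hP1 (t : ℝ) : HasDerivAt Pfun₁ (Pfun₂ t) t := by
  unfold Pfun₁ Pfun₂
  have h := (((hasDerivAt_pow 2 t).const_mul (30:ℝ)).sub ((hasDerivAt_pow 3 t).const_mul 60)).add
    ((hasDerivAt_pow 4 t).const_mul 30)
  exact h.congr_deriv (by push_cast; ring)

lemma hP2cont : Continuous Pfun₂ := by unfold Pfun₂; fun_prop

lemma piece_deriv (c d b : ℝ) (t : ℝ) :
    HasDerivAt (fun s => c + d * Pfun (s - b)) (d * Pfun₁ (t - b)) t := by
  have h := (hP (t - b)).comp t ((hasDerivAt_id t).sub_const b)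
  simpa using (h.const_mul d).const_add c

lemma piece_deriv₁ (d b : ℝ) (t : ℝ) :
    HasDerivAt (fun s => d * Pfun₁ (s - b)) (d * Pfun₂ (t - b)) t := by
  have h := (hP1 (t - b)).comp t ((hasDerivAt_id t).sub_const b)
  simpa using h.const_mul d

lemma P_mem {t : ℝ} (h : t ∈ Icc (0:ℝ) 1) : Pfun t ∈ Icc (0:ℝ) 1 := by
  obtain ⟨h0, h1⟩ := h
  have h1' : (0:ℝ) ≤ 1 - t := by linarith
  constructor
  · unfold Pfun; nlinarith [pow_nonneg h0 3, sq_nonneg (1-t), mul_nonneg (pow_nonneg h0 3) (sq_nonneg (1-t)), mul_nonneg (pow_nonneg h0 3) h1']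
  · unfold Pfun; nlinarith [pow_nonneg h1' 3, sq_nonneg t, mul_nonneg (pow_nonneg h1' 3) (sq_nonneg t), mul_nonneg (pow_nonneg h1' 3) h0]

lemma P1_bound {t : ℝ} (h : t ∈ Icc (0:ℝ) 1) : |Pfun₁ t| ≤ 30 := by
  obtain ⟨h0, h1⟩ := h
  have h1' : (0:ℝ) ≤ 1 - t := by linarith
  rw [abs_le]; unfold Pfun₁
  constructor
  · nlinarith [sq_nonneg (t*(1-t)), sq_nonneg t, sq_nonneg (1-t)]
  · nlinarith [sq_nonneg (t*(1-t)), sq_nonneg t, sq_nonneg (1-t), mul_nonneg h0 h1']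

lemma P2_bound {t : ℝ} (h : t ∈ Icc (0:ℝ) 1) : |Pfun₂ t| ≤ 360 := by
  obtain ⟨h0, h1⟩ := h
  have h1' : (0:ℝ) ≤ 1 - t := by linarith
  rw [abs_le]; unfold Pfun₂
  constructor <;> nlinarith [sq_nonneg t, sq_nonneg (1-t), pow_nonneg h0 3, mul_nonneg h0 h1', mul_nonneg (mul_nonneg h0 h0) h1', mul_nonneg (mul_nonneg h0 h1') h1']

lemma P_zero : Pfun 0 = 0 := by norm_num [Pfun]
lemma P_one : Pfun 1 = 1 := by norm_num [Pfun]
lemma P1_zero : Pfun₁ 0 = 0 := by norm_num [Pfun₁]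
lemma P1_one : Pfun₁ 1 = 0 := by norm_num [Pfun₁]
lemma P2_zero : Pfun₂ 0 = 0 := by norm_num [Pfun₂]
lemma P2_one : Pfun₂ 1 = 0 := by norm_num [Pfun₂]

lemma glue_hasDerivAt (F G H : ℝ → ℝ) (a d : ℝ)
    (hFG : ∀ s ∈ Set.Ioc (a-1) a, F s = G s) (hFH : ∀ s ∈ Set.Ico a (a+1), F s = H s)
    (hG : HasDerivAt G d a) (hH : HasDerivAt H d a) : HasDerivAt F d a := by
  have m1 : Set.Ioc (a-1) a ∈ nhdsWithin a (Iic a) := by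
    rw [show Set.Ioc (a-1) a = Set.Iic a ∩ Set.Ioi (a-1) by ext s; simp [Set.mem_Ioc, and_comm]]
    exact inter_mem_nhdsWithin _ (Ioi_mem_nhds (show a-1 < a by linarith))
  have m2 : Set.Ico a (a+1) ∈ nhdsWithin a (Ici a) := by
    rw [show Set.Ico a (a+1) = Set.Ici a ∩ Set.Iio (a+1) by ext s; simp [Set.mem_Ico, and_comm]]
    exact inter_mem_nhdsWithin _ (Iio_mem_nhds (show a < a+1 by linarith))
  have h1 : HasDerivWithinAt F d (Iic a) a := by
    refine hG.hasDerivWithinAt.congr_of_eventuallyEq ?_ (hFG a ⟨by linarith, le_refl a⟩)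
    filter_upwards [m1] with s hs using hFG s hs
  have h2 : HasDerivWithinAt F d (Ici a) a := by
    refine hH.hasDerivWithinAt.congr_of_eventuallyEq ?_ (hFH a ⟨le_refl a, by linarith⟩)
    filter_upwards [m2] with s hs using hFH s hs
  have h3 := h1.union h2
  rw [Set.Iic_union_Ici] at h3
  exact hasDerivWithinAt_univ.mp h3

lemma glue_continuousAt (F G H : ℝ → ℝ) (a : ℝ)
    (hFG : ∀ s ∈ Set.Ioc (a-1) a, F s = G s) (hFH : ∀ s ∈ Set.Ico a (a+1), F s = H s)
    (hG : ContinuousAt G a) (hH : ContinuousAt H a) : ContinuousAt F a := by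
  have m1 : Set.Ioc (a-1) a ∈ nhdsWithin a (Iic a) := by
    rw [show Set.Ioc (a-1) a = Set.Iic a ∩ Set.Ioi (a-1) by ext s; simp [Set.mem_Ioc, and_comm]]
    exact inter_mem_nhdsWithin _ (Ioi_mem_nhds (show a-1 < a by linarith))
  have m2 : Set.Ico a (a+1) ∈ nhdsWithin a (Ici a) := by
    rw [show Set.Ico a (a+1) = Set.Ici a ∩ Set.Iio (a+1) by ext s; simp [Set.mem_Ico, and_comm]]
    exact inter_mem_nhdsWithin _ (Iio_mem_nhds (show a < a+1 by linarith))
  have h1 : ContinuousWithinAt F (Iic a) a := by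
    refine hG.continuousWithinAt.congr_of_eventuallyEq ?_ (hFG a ⟨by linarith, le_refl a⟩)
    filter_upwards [m1] with s hs using hFG s hs
  have h2 : ContinuousWithinAt F (Ici a) a := by
    refine hH.continuousWithinAt.congr_of_eventuallyEq ?_ (hFH a ⟨le_refl a, by linarith⟩)
    filter_upwards [m2] with s hs using hFH s hs
  have h3 := h1.union h2
  rw [Set.Iic_union_Ici] at h3
  exact (continuousWithinAt_univ F a).mp h3

noncomputable def Afun (x : ℕ → ℝ) (n : ℤ) : ℝ := Real.log (x n.natAbs)
noncomputable def Dfun (x : ℕ → ℝ) (n : ℤ) : ℝ := Afun x (n+1) - Afun x n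
noncomputable def ffun (x : ℕ → ℝ) (t : ℝ) : ℝ :=
  Afun x ⌊t⌋ + Dfun x ⌊t⌋ * Pfun (t - ⌊t⌋)
noncomputable def ffun₁ (x : ℕ → ℝ) (t : ℝ) : ℝ := Dfun x ⌊t⌋ * Pfun₁ (t - ⌊t⌋)
noncomputable def ffun₂ (x : ℕ → ℝ) (t : ℝ) : ℝ := Dfun x ⌊t⌋ * Pfun₂ (t - ⌊t⌋)

-- on [n, n+1) the functions agree with the smooth pieces
lemma floor_on (n : ℤ) {t : ℝ} (h : t ∈ Ico (n:ℝ) ((n:ℝ)+1)) : ⌊t⌋ = n := by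
  rw [Int.floor_eq_iff]
  · exact ⟨h.1, by push_cast; exact h.2⟩

lemma ffun_on (x : ℕ → ℝ) (n : ℤ) {t : ℝ} (h : t ∈ Ico (n:ℝ) ((n:ℝ)+1)) :
    ffun x t = Afun x n + Dfun x n * Pfun (t - (n:ℝ)) := by
  unfold ffun; rw [floor_on n h]

lemma ffun₁_on (x : ℕ → ℝ) (n : ℤ) {t : ℝ} (h : t ∈ Ico (n:ℝ) ((n:ℝ)+1)) :
    ffun₁ x t = Dfun x n * Pfun₁ (t - (n:ℝ)) := by
  unfold ffun₁; rw [floor_on n h]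

lemma ffun₂_on (x : ℕ → ℝ) (n : ℤ) {t : ℝ} (h : t ∈ Ico (n:ℝ) ((n:ℝ)+1)) :
    ffun₂ x t = Dfun x n * Pfun₂ (t - (n:ℝ)) := by
  unfold ffun₂; rw [floor_on n h]

-- on (n-1, n] the functions agree with the left smooth piece
lemma ffun_left (x : ℕ → ℝ) (n : ℤ) {t : ℝ} (h : t ∈ Ioc ((n:ℝ)-1) (n:ℝ)) :
    ffun x t = Afun x (n-1) + Dfun x (n-1) * Pfun (t - ((n:ℝ)-1)) := by
  rcases eq_or_lt_of_le h.2 with heq | hlt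
  · subst heq
    have h0 : ffun x ((n:ℝ)) = Afun x n := by
      rw [ffun_on x n ⟨le_refl _, by linarith⟩]
      simp [P_zero]
    rw [h0, show ((n:ℝ) - ((n:ℝ)-1)) = 1 by ring, P_one, mul_one]
    unfold Dfun
    rw [show n - 1 + 1 = n by ring]
    ring
  · rw [ffun_on x (n-1) (by constructor <;> push_cast <;> [linarith [h.1]; linarith])]
    push_cast
    ring_nf

lemma ffun₁_left (x : ℕ → ℝ) (n : ℤ) {t : ℝ} (h : t ∈ Ioc ((n:ℝ)-1) (n:ℝ)) :
    ffun₁ x t = Dfun x (n-1) * Pfun₁ (t - ((n:ℝ)-1)) := by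
  rcases eq_or_lt_of_le h.2 with heq | hlt
  · subst heq
    have h0 : ffun₁ x ((n:ℝ)) = 0 := by
      rw [ffun₁_on x n ⟨le_refl _, by linarith⟩]; simp [P1_zero]
    rw [h0, show ((n:ℝ) - ((n:ℝ)-1)) = 1 by ring, P1_one, mul_zero]
  · rw [ffun₁_on x (n-1) (by constructor <;> push_cast <;> [linarith [h.1]; linarith])]
    push_cast
    ring_nf

lemma ffun₂_left (x : ℕ → ℝ) (n : ℤ) {t : ℝ} (h : t ∈ Ioc ((n:ℝ)-1) (n:ℝ)) :
    ffun₂ x t = Dfun x (n-1) * Pfun₂ (t - ((n:ℝ)-1)) := by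
  rcases eq_or_lt_of_le h.2 with heq | hlt
  · subst heq
    have h0 : ffun₂ x ((n:ℝ)) = 0 := by
      rw [ffun₂_on x n ⟨le_refl _, by linarith⟩]; simp [P2_zero]
    rw [h0, show ((n:ℝ) - ((n:ℝ)-1)) = 1 by ring, P2_one, mul_zero]
  · rw [ffun₂_on x (n-1) (by constructor <;> push_cast <;> [linarith [h.1]; linarith])]
    push_cast
    ring_nf

lemma ffun_hasDeriv (x : ℕ → ℝ) (t : ℝ) : HasDerivAt (ffun x) (ffun₁ x t) t := by
  rcases eq_or_ne ((⌊t⌋:ℝ)) t with hti | hti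
  · obtain ⟨n, hn⟩ : ∃ n : ℤ, t = (n:ℝ) := ⟨⌊t⌋, hti.symm⟩
    subst hn
    have hv : ffun₁ x ((n:ℝ)) = 0 := by
      rw [ffun₁_on x n ⟨le_refl _, by linarith⟩]; simp [P1_zero]
    rw [hv]
    refine glue_hasDerivAt _ (fun s => Afun x (n-1) + Dfun x (n-1) * Pfun (s - ((n:ℝ)-1)))
      (fun s => Afun x n + Dfun x n * Pfun (s - (n:ℝ))) (n:ℝ) 0 ?_ ?_ ?_ ?_
    · intro s hs; exact ffun_left x n hs
    · intro s hs; exact ffun_on x n hs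
    · have h := piece_deriv (Afun x (n-1)) (Dfun x (n-1)) ((n:ℝ)-1) (n:ℝ)
      rw [show ((n:ℝ) - ((n:ℝ)-1)) = 1 by ring, P1_one, mul_zero] at h; exact h
    · have h := piece_deriv (Afun x n) (Dfun x n) (n:ℝ) (n:ℝ)
      rw [sub_self, P1_zero, mul_zero] at h; exact h
  · have h1 : (⌊t⌋:ℝ) < t := lt_of_le_of_ne (Int.floor_le t) hti
    have h2 : t < ⌊t⌋ + 1 := Int.lt_floor_add_one t
    have hev : ffun x =ᶠ[nhds t] (fun s => Afun x ⌊t⌋ + Dfun x ⌊t⌋ * Pfun (s - (⌊t⌋:ℝ))) := by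
      filter_upwards [Ioo_mem_nhds h1 h2] with s hs
      exact ffun_on x ⌊t⌋ ⟨le_of_lt hs.1, hs.2⟩
    have h := (piece_deriv (Afun x ⌊t⌋) (Dfun x ⌊t⌋) ((⌊t⌋:ℝ)) t).congr_of_eventuallyEq hev
    exact h

lemma ffun₁_hasDeriv (x : ℕ → ℝ) (t : ℝ) : HasDerivAt (ffun₁ x) (ffun₂ x t) t := by
  rcases eq_or_ne ((⌊t⌋:ℝ)) t with hti | hti
  · obtain ⟨n, hn⟩ : ∃ n : ℤ, t = (n:ℝ) := ⟨⌊t⌋, hti.symm⟩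
    subst hn
    have hv : ffun₂ x ((n:ℝ)) = 0 := by
      rw [ffun₂_on x n ⟨le_refl _, by linarith⟩]; simp [P2_zero]
    rw [hv]
    refine glue_hasDerivAt _ (fun s => Dfun x (n-1) * Pfun₁ (s - ((n:ℝ)-1)))
      (fun s => Dfun x n * Pfun₁ (s - (n:ℝ))) (n:ℝ) 0 ?_ ?_ ?_ ?_
    · intro s hs; exact ffun₁_left x n hs
    · intro s hs; exact ffun₁_on x n hs
    · have h := piece_deriv₁ (Dfun x (n-1)) ((n:ℝ)-1) (n:ℝ)
      rw [show ((n:ℝ) - ((n:ℝ)-1)) = 1 by ring, P2_one, mul_zero] at h; exact h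
    · have h := piece_deriv₁ (Dfun x n) (n:ℝ) (n:ℝ)
      rw [sub_self, P2_zero, mul_zero] at h; exact h
  · have h1 : (⌊t⌋:ℝ) < t := lt_of_le_of_ne (Int.floor_le t) hti
    have h2 : t < ⌊t⌋ + 1 := Int.lt_floor_add_one t
    have hev : ffun₁ x =ᶠ[nhds t] (fun s => Dfun x ⌊t⌋ * Pfun₁ (s - (⌊t⌋:ℝ))) := by
      filter_upwards [Ioo_mem_nhds h1 h2] with s hs
      exact ffun₁_on x ⌊t⌋ ⟨le_of_lt hs.1, hs.2⟩
    exact (piece_deriv₁ (Dfun x ⌊t⌋) ((⌊t⌋:ℝ)) t).congr_of_eventuallyEq hev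

lemma ffun₂_cont (x : ℕ → ℝ) : Continuous (ffun₂ x) := by
  have hc : ∀ d b : ℝ, Continuous (fun s : ℝ => d * Pfun₂ (s - b)) := fun d b =>
    continuous_const.mul (hP2cont.comp (continuous_id.sub continuous_const))
  rw [continuous_iff_continuousAt]
  intro t
  rcases eq_or_ne ((⌊t⌋:ℝ)) t with hti | hti
  · obtain ⟨n, hn⟩ : ∃ n : ℤ, t = (n:ℝ) := ⟨⌊t⌋, hti.symm⟩
    subst hn
    refine glue_continuousAt _ (fun s => Dfun x (n-1) * Pfun₂ (s - ((n:ℝ)-1)))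
      (fun s => Dfun x n * Pfun₂ (s - (n:ℝ))) (n:ℝ) ?_ ?_ ?_ ?_
    · intro s hs; exact ffun₂_left x n hs
    · intro s hs; exact ffun₂_on x n hs
    · exact (hc _ _).continuousAt
    · exact (hc _ _).continuousAt
  · have h1 : (⌊t⌋:ℝ) < t := lt_of_le_of_ne (Int.floor_le t) hti
    have h2 : t < ⌊t⌋ + 1 := Int.lt_floor_add_one t
    have hev : ffun₂ x =ᶠ[nhds t] (fun s => Dfun x ⌊t⌋ * Pfun₂ (s - (⌊t⌋:ℝ))) := by
      filter_upwards [Ioo_mem_nhds h1 h2] with s hs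
      exact ffun₂_on x ⌊t⌋ ⟨le_of_lt hs.1, hs.2⟩
    exact ((hc _ _).continuousAt).congr hev.symm

theorem stmt19 (x : ℕ → ℝ) (hpos : ∀ n, 0 < x n) (hdec : Antitone x)
    (hlim : Filter.Tendsto x Filter.atTop (nhds 0))
    (hratio : ∃ K : ℝ, ∀ n, x n / x (n + 1) ≤ K) :
    ∃ ρ : ℝ → ℝ, (∃ M, ∀ t, ρ t ≤ M) ∧ ContDiff ℝ 2 ρ ∧ (∀ t, 0 < ρ t) ∧
      (∀ n : ℤ, ρ n = x n.natAbs) ∧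
      ∃ c₁ c₂ : ℝ, (∀ t, |deriv ρ t / ρ t| ≤ c₁) ∧ (∀ t, |deriv (deriv ρ) t / ρ t| ≤ c₂) := by
  obtain ⟨K, hK⟩ := hratio
  set L := Real.log K with hLdef
  have hK1 : 1 ≤ K := le_trans ((one_le_div (hpos 1)).mpr (hdec (Nat.le_succ 0))) (hK 0)
  have hL0 : 0 ≤ L := Real.log_nonneg hK1
  -- bound on the increments
  have key : ∀ m : ℕ, 0 ≤ Real.log (x m) - Real.log (x (m+1)) ∧
      Real.log (x m) - Real.log (x (m+1)) ≤ L := by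
    intro m
    have h1 : x (m+1) ≤ x m := hdec (Nat.le_succ m)
    refine ⟨sub_nonneg.mpr (Real.log_le_log (hpos (m+1)) h1), ?_⟩
    rw [← Real.log_div (ne_of_gt (hpos m)) (ne_of_gt (hpos (m+1)))]
    exact le_trans (Real.log_le_log (div_pos (hpos m) (hpos (m+1))) (hK m)) le_rfl
  have hDbound : ∀ n : ℤ, |Dfun x n| ≤ L := by
    intro n
    rcases le_or_gt 0 n with hn | hn
    · have hnat : (n+1).natAbs = n.natAbs + 1 := by omega
      have h := key n.natAbs
      unfold Dfun Afun
      rw [hnat, abs_le]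
      constructor <;> linarith [h.1, h.2]
    · have hnat : n.natAbs = (n+1).natAbs + 1 := by omega
      have h := key (n+1).natAbs
      unfold Dfun Afun
      rw [hnat, abs_le]
      constructor <;> linarith [h.1, h.2]
  have hAbound : ∀ n : ℤ, Afun x n ≤ Afun x 0 := fun n => by
    unfold Afun
    exact Real.log_le_log (hpos _) (by simpa using hdec (Nat.zero_le n.natAbs))
  have hfrac : ∀ t : ℝ, t - (⌊t⌋:ℝ) ∈ Icc (0:ℝ) 1 :=
    fun t => ⟨sub_nonneg.mpr (Int.floor_le t), by linarith [Int.lt_floor_add_one t]⟩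
  refine ⟨fun t => Real.exp (ffun x t), ⟨x 0, ?_⟩, ?_, fun t => Real.exp_pos _, ?_, ?_⟩
  -- boundedness
  · intro t
    have hf : ffun x t ≤ Afun x 0 := by
      unfold ffun
      obtain ⟨hP0, hP1v⟩ := P_mem (hfrac t)
      rcases le_or_gt (Dfun x ⌊t⌋) 0 with hD | hD
      · have : Dfun x ⌊t⌋ * Pfun (t - ⌊t⌋) ≤ 0 := mul_nonpos_of_nonpos_of_nonneg hD hP0
        linarith [hAbound ⌊t⌋]
      · have : Dfun x ⌊t⌋ * Pfun (t - ⌊t⌋) ≤ Dfun x ⌊t⌋ := by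
          nlinarith
        have h2 : Afun x ⌊t⌋ + Dfun x ⌊t⌋ = Afun x (⌊t⌋+1) := by unfold Dfun; ring
        linarith [hAbound (⌊t⌋+1)]
    calc Real.exp (ffun x t) ≤ Real.exp (Afun x 0) := Real.exp_le_exp.mpr hf
      _ = x 0 := by unfold Afun; simp [Real.exp_log (hpos 0)]
  -- smoothness
  · have hd1 : ∀ t, HasDerivAt (fun t => Real.exp (ffun x t)) (Real.exp (ffun x t) * ffun₁ x t) t :=
      fun t => (ffun_hasDeriv x t).exp
    have hderivρ : deriv (fun t => Real.exp (ffun x t)) = fun t => Real.exp (ffun x t) * ffun₁ x t :=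
      funext fun t => (hd1 t).deriv
    have hd2 : ∀ t, HasDerivAt (fun t => Real.exp (ffun x t) * ffun₁ x t)
        (Real.exp (ffun x t) * ffun₁ x t * ffun₁ x t + Real.exp (ffun x t) * ffun₂ x t) t :=
      fun t => ((ffun_hasDeriv x t).exp).mul (ffun₁_hasDeriv x t)
    have hcf : Continuous (ffun x) :=
      continuous_iff_continuousAt.mpr fun t => (ffun_hasDeriv x t).continuousAt
    have hcf₁ : Continuous (ffun₁ x) :=
      continuous_iff_continuousAt.mpr fun t => (ffun₁_hasDeriv x t).continuousAt
    rw [show (2 : WithTop ℕ∞) = 1 + 1 from rfl, contDiff_succ_iff_deriv]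
    refine ⟨fun t => (hd1 t).differentiableAt, by simp, ?_⟩
    rw [hderivρ, contDiff_one_iff_deriv]
    refine ⟨fun t => (hd2 t).differentiableAt, ?_⟩
    rw [funext fun t => (hd2 t).deriv]
    exact (((Real.continuous_exp.comp hcf).mul hcf₁).mul hcf₁).add
      ((Real.continuous_exp.comp hcf).mul (ffun₂_cont x))
  -- values at integers
  · intro n
    have h : ffun x ((n:ℝ)) = Afun x n := by
      rw [ffun_on x n ⟨le_refl _, by linarith⟩]
      simp [P_zero]
    show Real.exp (ffun x (n:ℝ)) = x n.natAbs
    rw [h]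
    unfold Afun
    exact Real.exp_log (hpos _)
  -- derivative bounds
  · have hd1 : ∀ t, HasDerivAt (fun t => Real.exp (ffun x t)) (Real.exp (ffun x t) * ffun₁ x t) t :=
      fun t => (ffun_hasDeriv x t).exp
    have hderivρ : deriv (fun t => Real.exp (ffun x t)) = fun t => Real.exp (ffun x t) * ffun₁ x t :=
      funext fun t => (hd1 t).deriv
    have hd2 : ∀ t, HasDerivAt (fun t => Real.exp (ffun x t) * ffun₁ x t)
        (Real.exp (ffun x t) * ffun₁ x t * ffun₁ x t + Real.exp (ffun x t) * ffun₂ x t) t :=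
      fun t => ((ffun_hasDeriv x t).exp).mul (ffun₁_hasDeriv x t)
    have hf₁b : ∀ t, |ffun₁ x t| ≤ 30 * L := by
      intro t
      unfold ffun₁
      rw [abs_mul]
      calc |Dfun x ⌊t⌋| * |Pfun₁ (t - ⌊t⌋)| ≤ L * 30 :=
        mul_le_mul (hDbound _) (P1_bound (hfrac t)) (abs_nonneg _) hL0
        _ = 30 * L := by ring
    have hf₂b : ∀ t, |ffun₂ x t| ≤ 360 * L := by
      intro t
      unfold ffun₂
      rw [abs_mul]
      calc |Dfun x ⌊t⌋| * |Pfun₂ (t - ⌊t⌋)| ≤ L * 360 :=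
        mul_le_mul (hDbound _) (P2_bound (hfrac t)) (abs_nonneg _) hL0
        _ = 360 * L := by ring
    refine ⟨30 * L, 900 * L^2 + 360 * L, ?_, ?_⟩
    · intro t
      rw [hderivρ]
      have : Real.exp (ffun x t) * ffun₁ x t / Real.exp (ffun x t) = ffun₁ x t := by
        rw [mul_comm, mul_div_assoc, div_self (Real.exp_ne_zero _), mul_one]
      rw [this]
      exact hf₁b t
    · intro t
      rw [hderivρ, funext fun t => (hd2 t).deriv]
      have heq : (Real.exp (ffun x t) * ffun₁ x t * ffun₁ x t + Real.exp (ffun x t) * ffun₂ x t) /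
          Real.exp (ffun x t) = ffun₁ x t * ffun₁ x t + ffun₂ x t := by
        field_simp
      rw [heq]
      calc |ffun₁ x t * ffun₁ x t + ffun₂ x t| ≤ |ffun₁ x t| * |ffun₁ x t| + |ffun₂ x t| := by
            rw [← abs_mul]; exact abs_add_le _ _
        _ ≤ (30*L) * (30*L) + 360*L :=
            add_le_add (mul_le_mul (hf₁b t) (hf₁b t) (abs_nonneg _) (by linarith)) (hf₂b t)
        _ = 900 * L^2 + 360 * L := by ring
end
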